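/- For all real α, β > 0 with α + β < π, one has Л(α) + Л(β) + Л(π − α − β) ≤ 3 Л(π/3), with equality if and only if α = β = π/3. -/

import Mathlib

/-!
Since `Л'(θ) = -log |2 sin θ|`, moving two angles with fixed sum `s < π` towards each other
increases `Л α + Л β`: the smaller angle has the smaller sine. Hence the volume is at most
`2 Л(s/2) + Л(π - s)`, strictly unless `α = β`. The derivative of this function of `s` is
`log (sin s / sin (s/2)) = log (2 cos (s/2))`, positive before `2π/3` and negative after it.
-/

/-- The Lobachevsky function `Л(θ) = -∫₀^θ log |2 sin t| dt`. -/
noncomputable def lobachevsky (θ : ℝ) : ℝ :=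
  -∫ t in (0 : ℝ)..θ, Real.log |2 * Real.sin t|

open Real Set

theorem intervalIntegrable_log_abs_two_mul_sin (a b : ℝ) :
    IntervalIntegrable (fun t => log |2 * sin t|) MeasureTheory.volume a b :=
  (analyticOnNhd_const.mul analyticOnNhd_sin).meromorphicOn.intervalIntegrable_log_norm

theorem hasDerivAt_lobachevsky {x : ℝ} (hx : sin x ≠ 0) :
    HasDerivAt lobachevsky (-log |2 * sin x|) x := by
  have hcont : ContinuousAt (fun t => log |2 * sin t|) x :=
    ((continuous_const.mul continuous_sin).abs.continuousAt).log (by simpa using hx)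
  exact (intervalIntegral.integral_hasDerivAt_right (intervalIntegrable_log_abs_two_mul_sin 0 x)
    (by fun_prop : Measurable _).stronglyMeasurable.stronglyMeasurableAtFilter hcont).neg

theorem sin_lt_sin_of_lt_of_add_lt_pi {x y : ℝ} (hx : 0 < x) (hxy : x < y) (h : x + y < π) :
    sin x < sin y := by
  have hsin : 0 < sin ((y - x) / 2) := sin_pos_of_pos_of_lt_pi (by linarith) (by linarith)
  have hcos : 0 < cos ((y + x) / 2) := cos_pos_of_mem_Ioo ⟨by linarith, by linarith⟩
  nlinarith [sin_sub_sin y x, mul_pos hsin hcos]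

theorem log_abs_two_mul_sin_lt {x y : ℝ} (hx : 0 < x) (hxy : x < y) (h : x + y < π) :
    log |2 * sin x| < log |2 * sin y| := by
  have hsx : 0 < sin x := sin_pos_of_pos_of_lt_pi hx (by linarith)
  have hlt := sin_lt_sin_of_lt_of_add_lt_pi hx hxy h
  rw [abs_of_pos (by positivity), abs_of_pos (by linarith)]
  exact log_lt_log (by positivity) (by linarith)

theorem lt_of_hasDerivAt_pos_of_neg {f f' : ℝ → ℝ} {a b c x : ℝ} (hc : c ∈ Ioo a b)
    (hf : ∀ y ∈ Ioo a b, HasDerivAt f (f' y) y) (hpos : ∀ y ∈ Ioo a c, 0 < f' y)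
    (hneg : ∀ y ∈ Ioo c b, f' y < 0) (hx : x ∈ Ioo a b) (hxc : x ≠ c) : f x < f c := by
  rcases hxc.lt_or_gt with hlt | hgt
  · have hmono : StrictMonoOn f (Ioc a c) := by
      refine strictMonoOn_of_hasDerivWithinAt_pos (convex_Ioc a c)
        (fun y hy => (hf y ⟨hy.1, hy.2.trans_lt hc.2⟩).continuousAt.continuousWithinAt)
        (fun y hy => ?_) (by rwa [interior_Ioc])
      rw [interior_Ioc] at hy ⊢
      exact (hf y ⟨hy.1, hy.2.trans hc.2⟩).hasDerivWithinAt
    exact hmono ⟨hx.1, hlt.le⟩ ⟨hc.1, le_rfl⟩ hlt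
  · have hanti : StrictAntiOn f (Ico c b) := by
      refine strictAntiOn_of_hasDerivWithinAt_neg (convex_Ico c b)
        (fun y hy => (hf y ⟨hc.1.trans_le hy.1, hy.2⟩).continuousAt.continuousWithinAt)
        (fun y hy => ?_) (by rwa [interior_Ico])
      rw [interior_Ico] at hy ⊢
      exact (hf y ⟨hc.1.trans hy.1, hy.2⟩).hasDerivWithinAt
    exact hanti ⟨le_rfl, hc.2⟩ ⟨hgt.le, hx.2⟩ hgt

theorem lobachevsky_add_lobachevsky_lt {α β : ℝ} (hα : 0 < α) (hβ : 0 < β) (h : α + β < π)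
    (hne : α ≠ β) : lobachevsky α + lobachevsky β < 2 * lobachevsky ((α + β) / 2) := by
  set s := α + β
  have hderiv : ∀ t ∈ Ioo 0 s, HasDerivAt (fun t => lobachevsky t + lobachevsky (s - t))
      (log |2 * sin (s - t)| - log |2 * sin t|) t := by
    intro t ⟨ht, hts⟩
    have hleft := hasDerivAt_lobachevsky (sin_pos_of_pos_of_lt_pi ht (by linarith)).ne'
    have hright := hasDerivAt_lobachevsky (sin_pos_of_pos_of_lt_pi (x := s - t) (by linarith)
      (by linarith)).ne'
    exact (hleft.add (hright.comp_const_sub s t)).congr_deriv (by ring)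
  have key := lt_of_hasDerivAt_pos_of_neg (c := s / 2) (x := α) ⟨by positivity, by linarith⟩
    hderiv
    (fun t ⟨ht, hts⟩ => sub_pos.2 (log_abs_two_mul_sin_lt ht (by linarith) (by linarith)))
    (fun t ⟨hst, hts⟩ => sub_neg.2
      (log_abs_two_mul_sin_lt (by linarith) (by linarith) (by linarith)))
    ⟨hα, by linarith⟩ (by contrapose! hne; linarith)
  rwa [show s - α = β by ring, show s - s / 2 = s / 2 by ring, ← two_mul] at key

theorem two_mul_lobachevsky_half_add_lobachevsky_pi_sub_lt {s : ℝ} (hs : 0 < s) (hs' : s < π)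
    (hne : s ≠ 2 * π / 3) :
    2 * lobachevsky (s / 2) + lobachevsky (π - s) < 3 * lobachevsky (π / 3) := by
  have hderiv : ∀ u ∈ Ioo 0 π,
      HasDerivAt (fun u => 2 * lobachevsky (u / 2) + lobachevsky (π - u))
        (log |2 * sin (π - u)| - log |2 * sin (u / 2)|) u := by
    intro u ⟨hu, huπ⟩
    have hhalf := hasDerivAt_lobachevsky (sin_pos_of_pos_of_lt_pi (x := u / 2) (by linarith)
      (by linarith)).ne'
    have hrest := hasDerivAt_lobachevsky (sin_pos_of_pos_of_lt_pi (x := π - u) (by linarith)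
      (by linarith)).ne'
    have hsum := ((hhalf.comp u ((hasDerivAt_id' u).div_const 2)).const_mul 2).add
      (hrest.comp_const_sub π u)
    exact hsum.congr_deriv (by ring)
  -- `u / 2` and `π - u` have sum `< π`, and `u / 2 < π - u` iff `u < 2π/3`.
  have key := lt_of_hasDerivAt_pos_of_neg (c := 2 * π / 3) (x := s)
    ⟨by positivity, by linarith [pi_pos]⟩ hderiv
    (fun u ⟨hu, hu'⟩ => sub_pos.2
      (log_abs_two_mul_sin_lt (by linarith) (by linarith) (by linarith)))
    (fun u ⟨hu, hu'⟩ => sub_neg.2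
      (log_abs_two_mul_sin_lt (by linarith) (by linarith) (by linarith)))
    ⟨hs, hs'⟩ hne
  rwa [show 2 * π / 3 / 2 = π / 3 by ring, show π - 2 * π / 3 = π / 3 by ring,
    ← add_one_mul, two_add_one_eq_three] at key

theorem two_mul_lobachevsky_half_add_lobachevsky_pi_sub_le {s : ℝ} (hs : 0 < s) (hs' : s < π) :
    2 * lobachevsky (s / 2) + lobachevsky (π - s) ≤ 3 * lobachevsky (π / 3) := by
  rcases eq_or_ne s (2 * π / 3) with rfl | hne
  · rw [show 2 * π / 3 / 2 = π / 3 by ring, show π - 2 * π / 3 = π / 3 by ring]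
    linarith
  · exact (two_mul_lobachevsky_half_add_lobachevsky_pi_sub_lt hs hs' hne).le

/-- The volume `Л(α) + Л(β) + Л(π - α - β)` of an ideal tetrahedron is at most
`3 Л(π/3)`, with equality iff `α = β = π/3`. -/
theorem ideal_tetrahedron_max_volume (α β : ℝ) (hα : 0 < α) (hβ : 0 < β)
    (hαβ : α + β < Real.pi) :
    lobachevsky α + lobachevsky β + lobachevsky (Real.pi - α - β) ≤
        3 * lobachevsky (Real.pi / 3) ∧
      (lobachevsky α + lobachevsky β + lobachevsky (Real.pi - α - β) =
          3 * lobachevsky (Real.pi / 3) ↔ α = Real.pi / 3 ∧ β = Real.pi / 3) := by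
  have hγ : π - α - β = π - (α + β) := by ring
  have hregular : lobachevsky (π / 3) + lobachevsky (π / 3) + lobachevsky (π - π / 3 - π / 3) =
      3 * lobachevsky (π / 3) := by
    rw [show π - π / 3 - π / 3 = π / 3 by ring]; ring
  have hlt : ¬(α = π / 3 ∧ β = π / 3) →
      lobachevsky α + lobachevsky β + lobachevsky (π - α - β) < 3 * lobachevsky (π / 3) := by
    intro hnot
    rw [hγ]
    rcases eq_or_ne α β with rfl | hne
    · have := two_mul_lobachevsky_half_add_lobachevsky_pi_sub_lt (s := α + α) (by linarith) hαβ
        (fun h => hnot ⟨by linarith, by linarith⟩)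
      rw [show (α + α) / 2 = α by ring] at this
      linarith
    · linarith [lobachevsky_add_lobachevsky_lt hα hβ hαβ hne,
        two_mul_lobachevsky_half_add_lobachevsky_pi_sub_le (by linarith) hαβ]
  refine ⟨?_, fun heq => ?_, ?_⟩
  · by_cases hreg : α = π / 3 ∧ β = π / 3
    · obtain ⟨rfl, rfl⟩ := hreg
      exact hregular.le
    · exact (hlt hreg).le
  · by_contra hnot
    exact (hlt hnot).ne heq
  · rintro ⟨rfl, rfl⟩
    exact hregular
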